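/- Let t ∈ ℝ and let ω, θ : ℝ² → ℝ be twice continuously differentiable functions satisfying the real form of the elliptic Bäcklund system with parameter σ = e^{it}: ∂θ/∂v − ∂ω/∂u = sinh θ · cos ω · cos t + cosh θ · sin ω · sin t and ∂θ/∂u + ∂ω/∂v = sinh θ · cos ω · sin t − cosh θ · sin ω · cos t at every point of ℝ². Then ω satisfies the elliptic sine-Gordon equation ∂²ω/∂u² + ∂²ω/∂v² = cos ω · sin ω and θ satisfies the elliptic sinh-Gordon equation ∂²θ/∂u² + ∂²θ/∂v² = cosh θ · sinh θ at every point of ℝ². -/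

import Mathlib

/-!
Write the system as `θ_v - ω_u = F(θ, ω)`, `θ_u + ω_v = G(θ, ω)`. Differentiating and using the
symmetry of mixed partials gives `Δθ = ∂_u G + ∂_v F` and `Δω = ∂_v G - ∂_u F` for any `C²` pair.
The nonlinearities obey the Cauchy–Riemann-type relations `∂_θ F = -∂_ω G = P` and
`∂_ω F = ∂_θ G = Q`, so the chain rule followed by the system once more yields
`Δθ = Q G + P F` and `Δω = Q F - P G`. By `cos² + sin² = 1` and `cosh² - sinh² = 1` these are
`cosh θ sinh θ` and `cos ω sin ω`.
-/

/-- Partial derivative with respect to the first variable `u`. -/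
noncomputable def pdu (f : ℝ × ℝ → ℝ) (p : ℝ × ℝ) : ℝ :=
  deriv (fun u => f (u, p.2)) p.1

/-- Partial derivative with respect to the second variable `v`. -/
noncomputable def pdv (f : ℝ × ℝ → ℝ) (p : ℝ × ℝ) : ℝ :=
  deriv (fun v => f (p.1, v)) p.2

open Real

section PartialDerivatives

variable {f : ℝ × ℝ → ℝ} {p : ℝ × ℝ}

lemma hasDerivAt_pdu (hf : DifferentiableAt ℝ f p) :
    HasDerivAt (fun u => f (u, p.2)) (pdu f p) p.1 :=
  (hf.comp p.1 (differentiableAt_id.prodMk (differentiableAt_const p.2))).hasDerivAt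

lemma hasDerivAt_pdv (hf : DifferentiableAt ℝ f p) :
    HasDerivAt (fun v => f (p.1, v)) (pdv f p) p.2 :=
  (hf.comp p.2 ((differentiableAt_const p.1).prodMk differentiableAt_id)).hasDerivAt

lemma pdu_eq_fderiv (hf : DifferentiableAt ℝ f p) : pdu f p = fderiv ℝ f p (1, 0) :=
  (hf.hasFDerivAt.comp_hasDerivAt p.1
    ((hasDerivAt_id p.1).prodMk (hasDerivAt_const p.1 p.2))).deriv

lemma pdv_eq_fderiv (hf : DifferentiableAt ℝ f p) : pdv f p = fderiv ℝ f p (0, 1) :=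
  (hf.hasFDerivAt.comp_hasDerivAt p.2
    ((hasDerivAt_const p.2 p.1).prodMk (hasDerivAt_id p.2))).deriv

lemma contDiff_pdu {n : WithTop ℕ∞} (hf : ContDiff ℝ (n + 1) f) : ContDiff ℝ n (pdu f) := by
  have hdf : Differentiable ℝ f := hf.differentiable (by simp)
  rw [show pdu f = fun q => fderiv ℝ f q (1, 0) from funext fun q => pdu_eq_fderiv (hdf q)]
  exact (hf.fderiv_right le_rfl).clm_apply contDiff_const

lemma contDiff_pdv {n : WithTop ℕ∞} (hf : ContDiff ℝ (n + 1) f) : ContDiff ℝ n (pdv f) := by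
  have hdf : Differentiable ℝ f := hf.differentiable (by simp)
  rw [show pdv f = fun q => fderiv ℝ f q (0, 1) from funext fun q => pdv_eq_fderiv (hdf q)]
  exact (hf.fderiv_right le_rfl).clm_apply contDiff_const

lemma differentiable_pdu (hf : ContDiff ℝ 2 f) : Differentiable ℝ (pdu f) :=
  (contDiff_pdu (n := 1) hf).differentiable one_ne_zero

lemma differentiable_pdv (hf : ContDiff ℝ 2 f) : Differentiable ℝ (pdv f) :=
  (contDiff_pdv (n := 1) hf).differentiable one_ne_zero

lemma fderiv_fderiv_apply_const (hd : DifferentiableAt ℝ (fderiv ℝ f) p) (v w : ℝ × ℝ) :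
    fderiv ℝ (fun q => fderiv ℝ f q w) p v = fderiv ℝ (fderiv ℝ f) p v w := by
  simp [(hd.hasFDerivAt.clm_apply (hasFDerivAt_const w p)).fderiv]

lemma pdu_pdv_comm (hf : ContDiff ℝ 2 f) : pdu (pdv f) p = pdv (pdu f) p := by
  have hdf : Differentiable ℝ f := hf.differentiable two_ne_zero
  have hd : DifferentiableAt ℝ (fderiv ℝ f) p :=
    (hf.fderiv_right (m := 1) le_rfl).differentiable one_ne_zero p
  rw [pdu_eq_fderiv (differentiable_pdv hf p), pdv_eq_fderiv (differentiable_pdu hf p),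
    show pdv f = fun q => fderiv ℝ f q (0, 1) from funext fun q => pdv_eq_fderiv (hdf q),
    show pdu f = fun q => fderiv ℝ f q (1, 0) from funext fun q => pdu_eq_fderiv (hdf q),
    fderiv_fderiv_apply_const hd, fderiv_fderiv_apply_const hd]
  exact hf.contDiffAt.isSymmSndFDerivAt (by simp) _ _

end PartialDerivatives

noncomputable def laplacian (f : ℝ × ℝ → ℝ) (p : ℝ × ℝ) : ℝ :=
  pdu (pdu f) p + pdv (pdv f) p

section Laplacian

variable {θ ω : ℝ × ℝ → ℝ}

lemma laplacian_eq_pdu_add_pdv (hθ : ContDiff ℝ 2 θ) (hω : ContDiff ℝ 2 ω) (p : ℝ × ℝ) :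
    laplacian θ p =
      pdu (fun q => pdu θ q + pdv ω q) p + pdv (fun q => pdv θ q - pdu ω q) p := by
  have hu : pdu (fun q => pdu θ q + pdv ω q) p = pdu (pdu θ) p + pdu (pdv ω) p :=
    ((hasDerivAt_pdu (differentiable_pdu hθ p)).add
      (hasDerivAt_pdu (differentiable_pdv hω p))).deriv
  have hv : pdv (fun q => pdv θ q - pdu ω q) p = pdv (pdv θ) p - pdv (pdu ω) p :=
    ((hasDerivAt_pdv (differentiable_pdv hθ p)).sub
      (hasDerivAt_pdv (differentiable_pdu hω p))).deriv
  rw [laplacian, hu, hv, pdu_pdv_comm hω]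
  ring

lemma laplacian_eq_pdv_sub_pdu (hθ : ContDiff ℝ 2 θ) (hω : ContDiff ℝ 2 ω) (p : ℝ × ℝ) :
    laplacian ω p =
      pdv (fun q => pdu θ q + pdv ω q) p - pdu (fun q => pdv θ q - pdu ω q) p := by
  have hu : pdu (fun q => pdv θ q - pdu ω q) p = pdu (pdv θ) p - pdu (pdu ω) p :=
    ((hasDerivAt_pdu (differentiable_pdv hθ p)).sub
      (hasDerivAt_pdu (differentiable_pdu hω p))).deriv
  have hv : pdv (fun q => pdu θ q + pdv ω q) p = pdv (pdu θ) p + pdv (pdv ω) p :=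
    ((hasDerivAt_pdv (differentiable_pdu hθ p)).add
      (hasDerivAt_pdv (differentiable_pdv hω p))).deriv
  rw [laplacian, hu, hv, pdu_pdv_comm hθ]
  ring

end Laplacian

section BacklundNonlinearity

variable (t : ℝ)

noncomputable def backlundF (a b : ℝ) : ℝ := sinh a * cos b * cos t + cosh a * sin b * sin t

noncomputable def backlundG (a b : ℝ) : ℝ := sinh a * cos b * sin t - cosh a * sin b * cos t

noncomputable def backlundP (a b : ℝ) : ℝ := cosh a * cos b * cos t + sinh a * sin b * sin t

noncomputable def backlundQ (a b : ℝ) : ℝ := cosh a * cos b * sin t - sinh a * sin b * cos t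

variable {t} {a b : ℝ → ℝ} {a' b' x : ℝ}

lemma HasDerivAt.backlundF (ha : HasDerivAt a a' x) (hb : HasDerivAt b b' x) :
    HasDerivAt (fun x => backlundF t (a x) (b x))
      (backlundP t (a x) (b x) * a' + backlundQ t (a x) (b x) * b') x := by
  refine (((ha.sinh.mul hb.cos).mul_const (Real.cos t)).add
    ((ha.cosh.mul hb.sin).mul_const (Real.sin t))).congr_deriv ?_
  rw [backlundP, backlundQ]
  ring

lemma HasDerivAt.backlundG (ha : HasDerivAt a a' x) (hb : HasDerivAt b b' x) :
    HasDerivAt (fun x => backlundG t (a x) (b x))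
      (backlundQ t (a x) (b x) * a' - backlundP t (a x) (b x) * b') x := by
  refine (((ha.sinh.mul hb.cos).mul_const (Real.sin t)).sub
    ((ha.cosh.mul hb.sin).mul_const (Real.cos t))).congr_deriv ?_
  rw [backlundP, backlundQ]
  ring

variable (t) (a b : ℝ)

lemma backlundQ_mul_backlundG_add_backlundP_mul_backlundF :
    backlundQ t a b * backlundG t a b + backlundP t a b * backlundF t a b = cosh a * sinh a := by
  simp only [backlundF, backlundG, backlundP, backlundQ]
  linear_combination cosh a * sinh a * (sin b ^ 2 + cos b ^ 2) * sin_sq_add_cos_sq t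
    + cosh a * sinh a * sin_sq_add_cos_sq b

lemma backlundQ_mul_backlundF_sub_backlundP_mul_backlundG :
    backlundQ t a b * backlundF t a b - backlundP t a b * backlundG t a b = cos b * sin b := by
  simp only [backlundF, backlundG, backlundP, backlundQ]
  linear_combination cos b * sin b * (cosh a ^ 2 - sinh a ^ 2) * sin_sq_add_cos_sq t
    + cos b * sin b * cosh_sq_sub_sinh_sq a

end BacklundNonlinearity

lemma laplacian_eq_of_backlund {t : ℝ} {θ ω : ℝ × ℝ → ℝ}
    (hθ : ContDiff ℝ 2 θ) (hω : ContDiff ℝ 2 ω)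
    (hB1 : ∀ p, pdv θ p - pdu ω p = backlundF t (θ p) (ω p))
    (hB2 : ∀ p, pdu θ p + pdv ω p = backlundG t (θ p) (ω p)) (p : ℝ × ℝ) :
    laplacian θ p = backlundQ t (θ p) (ω p) * backlundG t (θ p) (ω p)
        + backlundP t (θ p) (ω p) * backlundF t (θ p) (ω p) ∧
      laplacian ω p = backlundQ t (θ p) (ω p) * backlundF t (θ p) (ω p)
        - backlundP t (θ p) (ω p) * backlundG t (θ p) (ω p) := by
  have hθp := hθ.differentiable two_ne_zero p
  have hωp := hω.differentiable two_ne_zero p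
  have hFu : pdu (fun q => backlundF t (θ q) (ω q)) p =
      backlundP t (θ p) (ω p) * pdu θ p + backlundQ t (θ p) (ω p) * pdu ω p :=
    ((hasDerivAt_pdu hθp).backlundF (hasDerivAt_pdu hωp)).deriv
  have hFv : pdv (fun q => backlundF t (θ q) (ω q)) p =
      backlundP t (θ p) (ω p) * pdv θ p + backlundQ t (θ p) (ω p) * pdv ω p :=
    ((hasDerivAt_pdv hθp).backlundF (hasDerivAt_pdv hωp)).deriv
  have hGu : pdu (fun q => backlundG t (θ q) (ω q)) p =
      backlundQ t (θ p) (ω p) * pdu θ p - backlundP t (θ p) (ω p) * pdu ω p :=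
    ((hasDerivAt_pdu hθp).backlundG (hasDerivAt_pdu hωp)).deriv
  have hGv : pdv (fun q => backlundG t (θ q) (ω q)) p =
      backlundQ t (θ p) (ω p) * pdv θ p - backlundP t (θ p) (ω p) * pdv ω p :=
    ((hasDerivAt_pdv hθp).backlundG (hasDerivAt_pdv hωp)).deriv
  rw [laplacian_eq_pdu_add_pdv hθ hω, laplacian_eq_pdv_sub_pdu hθ hω, funext hB1, funext hB2,
    hFu, hFv, hGu, hGv, ← hB1 p, ← hB2 p]
  constructor <;> ring

/-- If twice continuously differentiable `ω, θ : ℝ² → ℝ` satisfy the real form of the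
elliptic Bäcklund system with unit-modulus parameter `σ = e^{it}`:
`∂θ/∂v − ∂ω/∂u = sinh θ · cos ω · cos t + cosh θ · sin ω · sin t` and
`∂θ/∂u + ∂ω/∂v = sinh θ · cos ω · sin t − cosh θ · sin ω · cos t`,
then `ω` satisfies the elliptic sine-Gordon equation and `θ` satisfies the elliptic
sinh-Gordon equation. -/
theorem elliptic_backlund_implies_elliptic_equations
    (t : ℝ) (ω θ : ℝ × ℝ → ℝ)
    (hω : ContDiff ℝ 2 ω) (hθ : ContDiff ℝ 2 θ)
    (hB1 : ∀ p : ℝ × ℝ,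
      pdv θ p - pdu ω p =
        Real.sinh (θ p) * Real.cos (ω p) * Real.cos t
          + Real.cosh (θ p) * Real.sin (ω p) * Real.sin t)
    (hB2 : ∀ p : ℝ × ℝ,
      pdu θ p + pdv ω p =
        Real.sinh (θ p) * Real.cos (ω p) * Real.sin t
          - Real.cosh (θ p) * Real.sin (ω p) * Real.cos t) :
    (∀ p : ℝ × ℝ,
        pdu (pdu ω) p + pdv (pdv ω) p = Real.cos (ω p) * Real.sin (ω p)) ∧
    (∀ p : ℝ × ℝ,
        pdu (pdu θ) p + pdv (pdv θ) p = Real.cosh (θ p) * Real.sinh (θ p)) := by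
  have hΔ := laplacian_eq_of_backlund hθ hω hB1 hB2
  exact ⟨fun p => (hΔ p).2.trans (backlundQ_mul_backlundF_sub_backlundP_mul_backlundG t _ _),
    fun p => (hΔ p).1.trans (backlundQ_mul_backlundG_add_backlundP_mul_backlundF t _ _)⟩
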